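/- Let σ ∈ (0,1). Then the constant c(σ) := ∫_0^∞ (s² + 1)^{−(1+σ)/2} ds is finite, and for every R > 0 and every y > 0 one has ∫_0^R r^{1−σ} ((r² + y²)^{(1+σ)/2} − r^{1+σ}) / (r² + y²)^{(1+σ)/2} dr ≤ ((1+σ)/2) · c(σ) · y^{2−σ}. -/

import Mathlib

/-!
With `p = (1 + σ) / 2 ≤ 1`, concavity of `t ↦ t ^ p` gives
`(r² + y²) ^ p - r ^ (2p) ≤ p y² r ^ (2p - 2)`, so the integrand is at most
`p y² (r² + y²) ^ (-p)`. Extending the integral to `(0, ∞)` and substituting `r = y s` turns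
this bound into `p c(σ) y ^ (2 - σ)`.
-/

open MeasureTheory Set

lemma integrable_rpow_sq_add_one {a : ℝ} (ha : a < -1 / 2) :
    Integrable fun s : ℝ => (s ^ 2 + 1) ^ a := by
  have := integrable_rpow_neg_one_add_norm_sq (E := ℝ) (μ := volume) (r := -2 * a)
    (by rw [Module.finrank_self, Nat.cast_one]; linarith)
  convert this using 2 with s
  rw [Real.norm_eq_abs, sq_abs, add_comm]
  ring_nf

lemma rpow_sq_add_sq_eq_mul (a : ℝ) {y : ℝ} (hy : y ≠ 0) (r : ℝ) :
    (r ^ 2 + y ^ 2) ^ a = (y ^ 2) ^ a * ((y⁻¹ * r) ^ 2 + 1) ^ a := by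
  rw [← Real.mul_rpow (by positivity) (by positivity)]
  congr 1
  field_simp

lemma integrable_rpow_sq_add_sq {a y : ℝ} (ha : a < -1 / 2) (hy : y ≠ 0) :
    Integrable fun r : ℝ => (r ^ 2 + y ^ 2) ^ a := by
  simp_rw [rpow_sq_add_sq_eq_mul a hy]
  exact ((integrable_rpow_sq_add_one ha).comp_mul_left' (inv_ne_zero hy)).const_mul _

lemma integral_Ioi_rpow_sq_add_sq (a : ℝ) {y : ℝ} (hy : 0 < y) :
    ∫ r in Ioi 0, (r ^ 2 + y ^ 2) ^ a = (y ^ 2) ^ a * y * ∫ s in Ioi 0, (s ^ 2 + 1) ^ a := by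
  simp_rw [rpow_sq_add_sq_eq_mul a hy.ne', integral_const_mul,
    integral_comp_mul_left_Ioi (fun s => (s ^ 2 + 1) ^ a) 0 (inv_pos.2 hy)]
  simp [mul_assoc]

lemma rpow_add_sub_rpow_le {p a b : ℝ} (hp0 : 0 ≤ p) (hp1 : p ≤ 1) (ha : 0 < a)
    (hb : -a ≤ b) :
    (a + b) ^ p - a ^ p ≤ p * b * a ^ (p - 1) := by
  have hs : -1 ≤ b / a := by rw [le_div_iff₀ ha]; linarith
  have hab : a + b = a * (1 + b / a) := by field_simp
  rw [hab, Real.mul_rpow ha.le (by linarith), Real.rpow_sub_one ha.ne']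
  calc a ^ p * (1 + b / a) ^ p - a ^ p ≤ a ^ p * (1 + p * (b / a)) - a ^ p := by
        gcongr
        exact rpow_one_add_le_one_add_mul_self hs hp0 hp1
    _ = p * b * (a ^ p / a) := by ring

lemma near_field_integrand_le {σ y r : ℝ} (hσ0 : -1 ≤ σ) (hσ1 : σ < 1) (hy : y ≠ 0)
    (hr : 0 ≤ r) :
    r ^ (1 - σ) * ((r ^ 2 + y ^ 2) ^ ((1 + σ) / 2) - r ^ (1 + σ)) /
        (r ^ 2 + y ^ 2) ^ ((1 + σ) / 2)
      ≤ (1 + σ) / 2 * y ^ 2 * (r ^ 2 + y ^ 2) ^ (-(1 + σ) / 2) := by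
  have hD : 0 < r ^ 2 + y ^ 2 := by positivity
  rw [neg_div, Real.rpow_neg hD.le, ← div_eq_mul_inv]
  refine div_le_div_of_nonneg_right ?_ (by positivity)
  rcases hr.eq_or_lt with rfl | hr
  · rw [Real.zero_rpow (by linarith), zero_mul]
    exact mul_nonneg (by linarith) (sq_nonneg y)
  have hsq : ∀ q : ℝ, (r ^ 2) ^ q = r ^ (2 * q) := fun q => by
    rw [← Real.rpow_natCast, ← Real.rpow_mul hr.le, Nat.cast_ofNat]
  have hbound := rpow_add_sub_rpow_le (p := (1 + σ) / 2) (b := y ^ 2) (by linarith) (by linarith)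
    (by positivity : 0 < r ^ 2) (by nlinarith [sq_nonneg y])
  rw [hsq, hsq, mul_div_cancel₀ _ two_ne_zero] at hbound
  calc r ^ (1 - σ) * ((r ^ 2 + y ^ 2) ^ ((1 + σ) / 2) - r ^ (1 + σ))
      ≤ r ^ (1 - σ) * ((1 + σ) / 2 * y ^ 2 * r ^ (2 * ((1 + σ) / 2 - 1))) := by gcongr
    _ = (1 + σ) / 2 * y ^ 2 * (r ^ (1 - σ) * r ^ (2 * ((1 + σ) / 2 - 1))) := by ring
    _ = (1 + σ) / 2 * y ^ 2 := by
      rw [← Real.rpow_add hr, show 1 - σ + 2 * ((1 + σ) / 2 - 1) = 0 by ring, Real.rpow_zero,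
        mul_one]

lemma continuous_rpow_sq_add_sq (q : ℝ) {y : ℝ} (hy : y ≠ 0) :
    Continuous fun r : ℝ => (r ^ 2 + y ^ 2) ^ q :=
  (continuous_pow 2 |>.add continuous_const).rpow_const
    fun r => Or.inl (by positivity : 0 < r ^ 2 + y ^ 2).ne'

lemma continuous_near_field_integrand {σ y : ℝ} (hσ0 : -1 ≤ σ) (hσ1 : σ ≤ 1)
    (hy : y ≠ 0) :
    Continuous fun r : ℝ => r ^ (1 - σ) *
      ((r ^ 2 + y ^ 2) ^ ((1 + σ) / 2) - r ^ (1 + σ)) / (r ^ 2 + y ^ 2) ^ ((1 + σ) / 2) :=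
  ((continuous_id.rpow_const fun _ => Or.inr (by linarith)).mul
    ((continuous_rpow_sq_add_sq _ hy).sub
      (continuous_id.rpow_const fun _ => Or.inr (by linarith)))).div
    (continuous_rpow_sq_add_sq _ hy) fun r => (Real.rpow_pos_of_pos (by positivity) _).ne'

theorem stmt6 (σ : ℝ) (hσ : σ ∈ Set.Ioo (0:ℝ) 1) :
    IntegrableOn (fun s : ℝ => (s ^ 2 + 1) ^ (-(1 + σ) / 2)) (Set.Ioi 0) volume
    ∧ ∀ R > (0:ℝ), ∀ y > (0:ℝ),
        (∫ r in (0:ℝ)..R,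
          r ^ (1 - σ) *
            ((r ^ 2 + y ^ 2) ^ ((1 + σ) / 2) - r ^ (1 + σ)) /
              (r ^ 2 + y ^ 2) ^ ((1 + σ) / 2))
        ≤ ((1 + σ) / 2) * (∫ s in Set.Ioi (0:ℝ), (s ^ 2 + 1) ^ (-(1 + σ) / 2)) *
            y ^ (2 - σ) := by
  obtain ⟨hσ0, hσ1⟩ := hσ
  have ha : -(1 + σ) / 2 < -1 / 2 := by linarith
  refine ⟨(integrable_rpow_sq_add_one ha).integrableOn, fun R hR y hy => ?_⟩
  have hy_pow : y ^ 2 * ((y ^ 2) ^ (-(1 + σ) / 2) * y) = y ^ (2 - σ) := by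
    rw [show 2 - σ = 2 + (2 * (-(1 + σ) / 2) + 1) by ring, Real.rpow_add hy,
      Real.rpow_add_one hy.ne', Real.rpow_mul hy.le]
    norm_cast
  calc _ ≤ ∫ r in (0:ℝ)..R, (1 + σ) / 2 * y ^ 2 * (r ^ 2 + y ^ 2) ^ (-(1 + σ) / 2) :=
        intervalIntegral.integral_mono_on hR.le
          ((continuous_near_field_integrand (by linarith) hσ1.le hy.ne').intervalIntegrable _ _)
          (((continuous_rpow_sq_add_sq _ hy.ne').const_mul _).intervalIntegrable _ _)
          fun r hr => near_field_integrand_le (by linarith) hσ1 hy.ne' hr.1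
    _ = (1 + σ) / 2 * y ^ 2 * ∫ r in Ioc 0 R, (r ^ 2 + y ^ 2) ^ (-(1 + σ) / 2) := by
        rw [intervalIntegral.integral_of_le hR.le, integral_const_mul]
    _ ≤ (1 + σ) / 2 * y ^ 2 * ∫ r in Ioi 0, (r ^ 2 + y ^ 2) ^ (-(1 + σ) / 2) := by
        gcongr
        · exact ae_of_all _ fun r => (Real.rpow_pos_of_pos (by positivity) _).le
        · exact (integrable_rpow_sq_add_sq ha hy.ne').integrableOn
        · exact Ioc_subset_Ioi_self
    _ = _ := by
        rw [integral_Ioi_rpow_sq_add_sq _ hy, ← hy_pow]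
        ring
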